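/- Let φ : [0,∞) → [0,∞) be a convex function with φ(0) = 0, φ(u) > 0 for u > 0, φ nondecreasing and φ(u) → ∞. Let f : ℝ → ℝ be continuous with compact support, and let (χ_w)_{w>0} be kernels on ℝ satisfying: ∫_ℝ χ_w(z - t) dt = 1 for all z; sup_z ∫_ℝ |χ_w(z - t)| dt ≤ M; for every γ > 0, ∫_{|z-t|≥γ} |χ_w(z-t)| dt → 0 uniformly in z; and for every ε > 0 and γ > 0 there is R > 0 such that ∫_{|z| ≥ R} |χ_w(z - t)| dz < ε for all large w and all t ∈ [-γ, γ]. Then for every λ > 0, ∫_ℝ φ(λ |S_w f(z) − f(z)|) dz → 0 as w → ∞, where S_w f(z) = ∫_ℝ χ_w(z - t)( (w/2) ∫_{t-1/w}^{t+1/w} f(u) du ) dt. -/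

import Mathlib

/-!
Write `S_w f(z) = ∫ χ_w(z - t) K_w f(t) dt` with `K_w f(t) = (w/2) ∫_{t-1/w}^{t+1/w} f`.
Since `f` is uniformly continuous, `K_w f → f` uniformly, and the kernels form an approximate
identity, so `S_w f → f` uniformly on `ℝ`; as `φ(u) ≤ u φ(1)` for `u ∈ [0, 1]`, the modular over
any bounded interval tends to `0`. For the tail, `f` and (for `w ≥ 1`) `K_w f` vanish outside a
fixed compact interval `J`, so `|S_w f(z)| ≤ ‖f‖_∞ T_w(z)` with `T_w(z) = ∫_J |χ_w(z - t)| dt ≤ M`,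
and convexity gives `φ(λ |S_w f(z)|) ≤ T_w(z) φ(λ ‖f‖_∞ M) / M`. By Tonelli,
`∫_{|z| ≥ R} T_w = ∫_J ∫_{|z| ≥ R} |χ_w(z - t)| dz dt`, which the tail condition on the kernels
makes small uniformly in large `w`.
-/

open MeasureTheory Filter Set

section ConvexModular

variable {φ : ℝ → ℝ}

lemma MonotoneOn.nonneg_of_map_zero (hmono : MonotoneOn φ (Ici 0)) (h0 : φ 0 = 0) {u : ℝ}
    (hu : 0 ≤ u) : 0 ≤ φ u :=
  h0 ▸ hmono self_mem_Ici hu hu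

lemma ConvexOn.map_mul_le_of_map_zero (hconv : ConvexOn ℝ (Ici 0) φ) (h0 : φ 0 = 0) {s x : ℝ}
    (hs : 0 ≤ s) (hs1 : s ≤ 1) (hx : 0 ≤ x) : φ (s * x) ≤ s * φ x := by
  have := hconv.2 (mem_Ici.2 hx) self_mem_Ici hs (sub_nonneg.2 hs1) (add_sub_cancel s 1)
  simpa [h0] using this

lemma ConvexOn.exists_pos_forall_map_le (hconv : ConvexOn ℝ (Ici 0) φ) (h0 : φ 0 = 0)
    (hmono : MonotoneOn φ (Ici 0)) {δ : ℝ} (hδ : 0 < δ) :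
    ∃ η > 0, ∀ u, 0 ≤ u → u ≤ η → φ u ≤ δ := by
  have hφ1 : 0 ≤ φ 1 := hmono.nonneg_of_map_zero h0 zero_le_one
  refine ⟨min 1 (δ / (φ 1 + 1)), by positivity, fun u hu huη => ?_⟩
  calc φ u = φ (u * 1) := by rw [mul_one]
    _ ≤ u * φ 1 := hconv.map_mul_le_of_map_zero h0 hu (huη.trans (min_le_left _ _)) zero_le_one
    _ ≤ δ / (φ 1 + 1) * (φ 1 + 1) := by gcongr <;> linarith [min_le_right 1 (δ / (φ 1 + 1))]
    _ = δ := by field_simp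

lemma ConvexOn.map_le_div_mul_of_le (hconv : ConvexOn ℝ (Ici 0) φ) (h0 : φ 0 = 0)
    (hmono : MonotoneOn φ (Ici 0)) {x a T M : ℝ} (hx : 0 ≤ x) (ha : 0 ≤ a) (hxT : x ≤ a * T)
    (hT : 0 ≤ T) (hTM : T ≤ M) (hM : 0 < M) : φ x ≤ T / M * φ (a * M) :=
  calc φ x ≤ φ (a * T) := hmono hx (mul_nonneg ha hT) hxT
    _ = φ (T / M * (a * M)) := by field_simp
    _ ≤ T / M * φ (a * M) :=
      hconv.map_mul_le_of_map_zero h0 (by positivity) ((div_le_one hM).2 hTM) (by positivity)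

end ConvexModular

noncomputable def kantorovichMean (f : ℝ → ℝ) (w t : ℝ) : ℝ :=
  w / 2 * ∫ u in Icc (t - 1 / w) (t + 1 / w), f u

section KantorovichMean

variable {f : ℝ → ℝ}

lemma abs_kantorovichMean_sub_le {w t c η : ℝ} (hw : 0 < w)
    (hf : IntegrableOn f (Icc (t - 1 / w) (t + 1 / w)))
    (h : ∀ u ∈ Icc (t - 1 / w) (t + 1 / w), |f u - c| ≤ η) :
    |kantorovichMean f w t - c| ≤ η := by
  set I := Icc (t - 1 / w) (t + 1 / w)
  have hI : volume.real I = 2 / w := by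
    rw [Real.volume_real_Icc_of_le (by linarith [one_div_pos.2 hw])]; ring
  have hsub : kantorovichMean f w t - c = w / 2 * ∫ u in I, (f u - c) := by
    rw [integral_sub hf (integrableOn_const measure_Icc_lt_top.ne), setIntegral_const, hI,
      smul_eq_mul, mul_sub, show w / 2 * (2 / w * c) = c by field_simp]
    rfl
  have hbound : |∫ u in I, (f u - c)| ≤ η * (2 / w) := by
    rw [← hI, ← Real.norm_eq_abs]
    exact norm_setIntegral_le_of_norm_le_const measure_Icc_lt_top
      fun u hu => (Real.norm_eq_abs _).trans_le (h u hu)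
  rw [hsub, abs_mul, abs_of_pos (by positivity)]
  calc w / 2 * |∫ u in I, (f u - c)| ≤ w / 2 * (η * (2 / w)) := by gcongr
    _ = η := by field_simp

lemma abs_kantorovichMean_le (hf : Continuous f) {C w : ℝ} (hfC : ∀ u, |f u| ≤ C) (hw : 0 < w)
    (t : ℝ) : |kantorovichMean f w t| ≤ C := by
  simpa using abs_kantorovichMean_sub_le (c := 0) hw hf.integrableOn_Icc (fun u _ => by
    simpa using hfC u)

lemma kantorovichMean_eq_zero {ρ w t : ℝ} (hf : ∀ u, ρ ≤ |u| → f u = 0) (hw : 1 ≤ w)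
    (ht : ρ + 1 ≤ |t|) : kantorovichMean f w t = 0 := by
  have hw1 : 1 / w ≤ 1 := (div_le_one (by positivity)).2 hw
  rw [kantorovichMean, setIntegral_eq_zero_of_forall_eq_zero fun u hu => hf u ?_, mul_zero]
  have : |u - t| ≤ 1 / w := abs_le.2 ⟨by linarith [hu.1], by linarith [hu.2]⟩
  linarith [abs_sub_abs_le_abs_sub t u, abs_sub_comm t u]

lemma continuous_kantorovichMean (hf : Continuous f) {w : ℝ} (hw : 0 ≤ w) :
    Continuous (kantorovichMean f w) := by
  have hprim := intervalIntegral.continuous_primitive (μ := volume) (fun a b =>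
    hf.intervalIntegrable a b) 0
  have heq : kantorovichMean f w = fun t => w / 2 *
      ((∫ u in (0 : ℝ)..(t + 1 / w), f u) - ∫ u in (0 : ℝ)..(t - 1 / w), f u) := by
    funext t
    rw [kantorovichMean, integral_Icc_eq_integral_Ioc, ← intervalIntegral.integral_of_le
      (by linarith [one_div_nonneg.2 hw]), intervalIntegral.integral_interval_sub_left
      (hf.intervalIntegrable _ _) (hf.intervalIntegrable _ _)]
  rw [heq]
  fun_prop

lemma tendstoUniformly_kantorovichMean (hf : UniformContinuous f) :
    TendstoUniformly (kantorovichMean f) f atTop := by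
  rw [Metric.tendstoUniformly_iff]
  intro ε hε
  obtain ⟨γ, hγ, hfγ⟩ := Metric.uniformContinuous_iff.1 hf (ε / 2) (half_pos hε)
  filter_upwards [eventually_gt_atTop (1 / γ)] with w hw t
  have hw0 : 0 < w := (one_div_pos.2 hγ).trans hw
  have hwγ : 1 / w < γ := (one_div_lt hw0 hγ).2 hw
  rw [dist_comm, Real.dist_eq]
  refine (abs_kantorovichMean_sub_le hw0 hf.continuous.integrableOn_Icc fun u hu => ?_).trans_lt
    (half_lt_self hε)
  refine (hfγ (a := u) (b := t) ?_).le
  rw [Real.dist_eq, abs_lt]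
  constructor <;> linarith [hu.1, hu.2]

end KantorovichMean

section KernelIntegral

variable {κ g : ℝ → ℝ} {C : ℝ}

lemma integrable_of_integral_comp_sub_eq_one {z : ℝ} (h : ∫ t, κ (z - t) = 1) : Integrable κ :=
  (integrable_comp_sub_left κ z).1 (Integrable.of_integral_ne_zero (h ▸ one_ne_zero))

lemma MeasureTheory.Integrable.comp_sub_mul_of_bound (hκ : Integrable κ) (hg : Continuous g)
    (hgC : ∀ t, |g t| ≤ C) (z : ℝ) : Integrable fun t => κ (z - t) * g t :=
  (hκ.comp_sub_left z).mul_bdd hg.aestronglyMeasurable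
    (ae_of_all _ fun t => (Real.norm_eq_abs _).trans_le (hgC t))

lemma abs_integral_comp_sub_mul_le (hκ : Integrable κ) {s : Set ℝ} (hgC : ∀ t, |g t| ≤ C)
    (hgs : ∀ t ∉ s, g t = 0) (z : ℝ) :
    |∫ t, κ (z - t) * g t| ≤ C * ∫ t in s, |κ (z - t)| := by
  rw [← setIntegral_eq_integral_of_forall_compl_eq_zero fun t ht => by rw [hgs t ht, mul_zero],
    ← integral_const_mul, ← Real.norm_eq_abs]
  refine norm_integral_le_of_norm_le ((hκ.comp_sub_left z).abs.const_mul C).integrableOn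
    (ae_of_all _ fun t => ?_)
  rw [Real.norm_eq_abs, abs_mul, mul_comm]
  exact mul_le_mul_of_nonneg_right (hgC t) (abs_nonneg _)

lemma abs_integral_comp_sub_mul_sub_le {z γ η M : ℝ} (hκ1 : ∫ t, κ (z - t) = 1)
    (hκM : ∫ t, |κ (z - t)| ≤ M) (hg : Continuous g) (hgC : ∀ t, |g t| ≤ C) (hη : 0 ≤ η)
    (hgη : ∀ t, |z - t| < γ → |g t - g z| ≤ η) :
    |(∫ t, κ (z - t) * g t) - g z| ≤ η * M + 2 * C * ∫ t in {t | γ ≤ |z - t|}, |κ (z - t)| := by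
  have hκ := integrable_of_integral_comp_sub_eq_one hκ1
  have hκz := hκ.comp_sub_left z
  set A := {t | γ ≤ |z - t|}
  have hA : MeasurableSet A := measurableSet_le measurable_const (by fun_prop)
  have hpt : ∀ t, ‖κ (z - t) * (g t - g z)‖ ≤
      |κ (z - t)| * η + A.indicator (fun t => 2 * C * |κ (z - t)|) t := by
    intro t
    rw [Real.norm_eq_abs, abs_mul]
    by_cases ht : t ∈ A
    · have : |g t - g z| ≤ 2 * C := by linarith [abs_sub (g t) (g z), hgC t, hgC z]
      rw [indicator_of_mem ht]
      nlinarith [abs_nonneg (κ (z - t))]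
    · rw [indicator_of_notMem ht, add_zero]
      exact mul_le_mul_of_nonneg_left (hgη t (not_le.1 ht)) (abs_nonneg _)
  have hsub : (∫ t, κ (z - t) * g t) - g z = ∫ t, κ (z - t) * (g t - g z) := by
    simp_rw [mul_sub]
    rw [integral_sub (hκ.comp_sub_mul_of_bound hg hgC z) (hκz.mul_const _), integral_mul_const,
      hκ1, one_mul]
  rw [hsub, ← Real.norm_eq_abs]
  calc _ ≤ ∫ t, (|κ (z - t)| * η + A.indicator (fun t => 2 * C * |κ (z - t)|) t) :=
        norm_integral_le_of_norm_le ((hκz.abs.mul_const η).add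
          ((hκz.abs.const_mul _).indicator hA)) (ae_of_all _ hpt)
    _ = η * (∫ t, |κ (z - t)|) + 2 * C * ∫ t in A, |κ (z - t)| := by
        rw [integral_add (hκz.abs.mul_const η) ((hκz.abs.const_mul _).indicator hA),
          integral_mul_const, integral_indicator hA, integral_const_mul, mul_comm]
    _ ≤ _ := by gcongr

end KernelIntegral

section KernelFamily

variable {χ : ℝ → ℝ → ℝ} {M C : ℝ} {g : ℝ → ℝ}

theorem tendstoUniformly_integral_comp_sub_mul (hg : UniformContinuous g)
    (hgC : ∀ t, |g t| ≤ C)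
    (hnorm : ∀ w > (0:ℝ), ∀ z, ∫ t, χ w (z - t) = 1)
    (habs : ∀ w > (0:ℝ), ∀ z, ∫ t, |χ w (z - t)| ≤ M)
    (hconc : ∀ γ > (0:ℝ), ∀ ε > (0:ℝ), ∃ W : ℝ, ∀ w ≥ W, ∀ z : ℝ,
      ∫ t in {t : ℝ | γ ≤ |z - t|}, |χ w (z - t)| < ε) :
    TendstoUniformly (fun w z => ∫ t, χ w (z - t) * g t) g atTop := by
  have hC : 0 ≤ C := (abs_nonneg _).trans (hgC 0)
  have hM : 0 ≤ M := (integral_nonneg fun _ => abs_nonneg _).trans (habs 1 one_pos 0)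
  rw [Metric.tendstoUniformly_iff]
  intro ε hε
  obtain ⟨γ, hγ, hgγ⟩ := Metric.uniformContinuous_iff.1 hg (ε / (2 * (M + 1))) (by positivity)
  obtain ⟨W, hW⟩ := hconc γ hγ (ε / (4 * (C + 1))) (by positivity)
  filter_upwards [eventually_ge_atTop W, eventually_gt_atTop 0] with w hwW hw z
  have hnear : ∀ t, |z - t| < γ → |g t - g z| ≤ ε / (2 * (M + 1)) := fun t ht =>
    (hgγ (by rwa [Real.dist_eq, abs_sub_comm])).le
  have hM' : ε / (2 * (M + 1)) * M < ε / 2 := by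
    rw [div_mul_eq_mul_div, div_lt_iff₀ (by positivity)]; nlinarith
  have hC' : 2 * C * (ε / (4 * (C + 1))) ≤ ε / 2 := by
    rw [mul_div_assoc', div_le_div_iff₀ (by positivity) two_pos]; nlinarith
  rw [dist_comm, Real.dist_eq]
  calc _ ≤ ε / (2 * (M + 1)) * M + 2 * C * ∫ t in {t | γ ≤ |z - t|}, |χ w (z - t)| :=
        abs_integral_comp_sub_mul_sub_le (hnorm w hw z) (habs w hw z) hg.continuous hgC
          (by positivity) hnear
    _ ≤ ε / (2 * (M + 1)) * M + 2 * C * (ε / (4 * (C + 1))) := by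
        gcongr; exact (hW w hwW z).le
    _ < ε := by linarith

theorem tendstoUniformly_integral_comp_sub_mul_kantorovichMean {f : ℝ → ℝ}
    (hf : UniformContinuous f) (hfC : ∀ t, |f t| ≤ C)
    (hnorm : ∀ w > (0:ℝ), ∀ z, ∫ t, χ w (z - t) = 1)
    (habs : ∀ w > (0:ℝ), ∀ z, ∫ t, |χ w (z - t)| ≤ M)
    (hconc : ∀ γ > (0:ℝ), ∀ ε > (0:ℝ), ∃ W : ℝ, ∀ w ≥ W, ∀ z : ℝ,
      ∫ t in {t : ℝ | γ ≤ |z - t|}, |χ w (z - t)| < ε) :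
    TendstoUniformly (fun w z => ∫ t, χ w (z - t) * kantorovichMean f w t) f atTop := by
  have hM : 0 ≤ M := (integral_nonneg fun _ => abs_nonneg _).trans (habs 1 one_pos 0)
  have hdiff : TendstoUniformly (fun w z =>
      (∫ t, χ w (z - t) * kantorovichMean f w t) - ∫ t, χ w (z - t) * f t) 0 atTop := by
    rw [Metric.tendstoUniformly_iff]
    intro ε hε
    filter_upwards [Metric.tendstoUniformly_iff.1 (tendstoUniformly_kantorovichMean hf)
      (ε / (M + 1)) (by positivity), eventually_gt_atTop 0] with w hK hw z
    have hχ := integrable_of_integral_comp_sub_eq_one (hnorm w hw 0)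
    rw [← integral_sub (hχ.comp_sub_mul_of_bound (continuous_kantorovichMean hf.continuous hw.le)
      (abs_kantorovichMean_le hf.continuous hfC hw) z) (hχ.comp_sub_mul_of_bound hf.continuous
      hfC z), Pi.zero_apply, dist_zero_left, Real.norm_eq_abs]
    simp_rw [← mul_sub]
    calc _ ≤ ε / (M + 1) * ∫ t in univ, |χ w (z - t)| :=
          abs_integral_comp_sub_mul_le hχ (fun t => by
            rw [abs_sub_comm, ← Real.dist_eq]; exact (hK t).le)
            (fun t ht => absurd (mem_univ t) ht) z
      _ ≤ ε / (M + 1) * M := by rw [setIntegral_univ]; gcongr; exact habs w hw z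
      _ < ε := by rw [div_mul_eq_mul_div, div_lt_iff₀ (by positivity)]; nlinarith
  simpa [Pi.add_def] using
    hdiff.add (tendstoUniformly_integral_comp_sub_mul hf hfC hnorm habs hconc)

end KernelFamily

lemma setLIntegral_setLIntegral_enorm_comp_sub_le {κ : ℝ → ℝ} (hκ : AEMeasurable κ)
    {A J : Set ℝ} (hJ : MeasurableSet J) {c : ENNReal}
    (h : ∀ t ∈ J, ∫⁻ z in A, ‖κ (z - t)‖ₑ ≤ c) :
    ∫⁻ z in A, ∫⁻ t in J, ‖κ (z - t)‖ₑ ≤ c * volume J := by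
  have hmeas : AEMeasurable (Function.uncurry fun z t => ‖κ (z - t)‖ₑ)
      ((volume.restrict A).prod (volume.restrict J)) := by
    rw [Measure.prod_restrict]
    exact (hκ.comp_quasiMeasurePreserving
      (quasiMeasurePreserving_sub_of_right_invariant volume volume)).enorm.restrict
  calc _ = ∫⁻ t in J, ∫⁻ z in A, ‖κ (z - t)‖ₑ := lintegral_lintegral_swap hmeas
    _ ≤ ∫⁻ _ in J, c := setLIntegral_mono' hJ h
    _ = c * volume J := setLIntegral_const J c

section Modular

variable {φ : ℝ → ℝ} {κ f : ℝ → ℝ} {M C ρ lam w : ℝ}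

lemma abs_integral_comp_sub_mul_kantorovichMean_le (hκ : Integrable κ) (hf : Continuous f)
    (hfC : ∀ u, |f u| ≤ C) (hfρ : ∀ u, ρ ≤ |u| → f u = 0) (hw : 1 ≤ w) (z : ℝ) :
    |∫ t, κ (z - t) * kantorovichMean f w t| ≤ C * ∫ t in Icc (-(ρ + 1)) (ρ + 1), |κ (z - t)| :=
  abs_integral_comp_sub_mul_le hκ (abs_kantorovichMean_le hf hfC (by linarith)) (fun t ht =>
    kantorovichMean_eq_zero hfρ hw (by rw [mem_Icc, ← abs_le] at ht; exact (not_le.1 ht).le)) z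

lemma map_mul_abs_integral_comp_sub_mul_kantorovichMean_le (hconv : ConvexOn ℝ (Ici 0) φ)
    (h0 : φ 0 = 0) (hmono : MonotoneOn φ (Ici 0)) (hκ : Integrable κ) {z : ℝ}
    (hκM : ∫ t, |κ (z - t)| ≤ M) (hM : 0 < M) (hf : Continuous f) (hfC : ∀ u, |f u| ≤ C)
    (hfρ : ∀ u, ρ ≤ |u| → f u = 0) (hw : 1 ≤ w) (hlam : 0 ≤ lam) :
    φ (lam * |∫ t, κ (z - t) * kantorovichMean f w t|) ≤
      φ (lam * C * M) / M * ∫ t in Icc (-(ρ + 1)) (ρ + 1), |κ (z - t)| := by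
  have hC : 0 ≤ C := (abs_nonneg _).trans (hfC 0)
  have hT : 0 ≤ ∫ t in Icc (-(ρ + 1)) (ρ + 1), |κ (z - t)| :=
    integral_nonneg fun _ => abs_nonneg _
  have hTM : ∫ t in Icc (-(ρ + 1)) (ρ + 1), |κ (z - t)| ≤ M :=
    (setIntegral_le_integral (hκ.comp_sub_left z).abs (ae_of_all _ fun _ => abs_nonneg _)).trans hκM
  have hS := abs_integral_comp_sub_mul_kantorovichMean_le hκ hf hfC hfρ hw z
  rw [div_mul_comm]
  refine hconv.map_le_div_mul_of_le h0 hmono (by positivity) (by positivity) ?_ hT hTM hM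
  rw [mul_assoc]
  exact mul_le_mul_of_nonneg_left hS hlam

lemma setLIntegral_tail_map_le (hconv : ConvexOn ℝ (Ici 0) φ) (h0 : φ 0 = 0)
    (hmono : MonotoneOn φ (Ici 0)) (hκ : Integrable κ) (hκM : ∀ z, ∫ t, |κ (z - t)| ≤ M)
    (hM : 0 < M) (hf : Continuous f) (hfC : ∀ u, |f u| ≤ C) (hfρ : ∀ u, ρ ≤ |u| → f u = 0)
    (hw : 1 ≤ w) (hlam : 0 ≤ lam) {R ε : ℝ} (hR : ρ ≤ R)
    (hκR : ∀ t ∈ Icc (-(ρ + 1)) (ρ + 1), ∫ z in {z | R ≤ |z|}, |κ (z - t)| ≤ ε) :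
    ∫⁻ z in {z | R ≤ |z|},
      ENNReal.ofReal (φ (lam * |(∫ t, κ (z - t) * kantorovichMean f w t) - f z|)) ≤
        ENNReal.ofReal (φ (lam * C * M) / M) *
          (ENNReal.ofReal ε * volume (Icc (-(ρ + 1)) (ρ + 1))) := by
  set J := Icc (-(ρ + 1)) (ρ + 1)
  have hc : 0 ≤ φ (lam * C * M) / M := div_nonneg (hmono.nonneg_of_map_zero h0
    (mul_nonneg (mul_nonneg hlam ((abs_nonneg _).trans (hfC 0))) hM.le)) hM.le
  have hpt : ∀ z ∈ {z | R ≤ |z|},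
      ENNReal.ofReal (φ (lam * |(∫ t, κ (z - t) * kantorovichMean f w t) - f z|)) ≤
        ENNReal.ofReal (φ (lam * C * M) / M) * ∫⁻ t in J, ‖κ (z - t)‖ₑ := by
    intro z (hz : R ≤ |z|)
    rw [hfρ z (hR.trans hz), sub_zero, ← ofReal_integral_norm_eq_lintegral_enorm
      (hκ.comp_sub_left z).integrableOn, ← ENNReal.ofReal_mul hc]
    exact ENNReal.ofReal_le_ofReal (map_mul_abs_integral_comp_sub_mul_kantorovichMean_le hconv
      h0 hmono hκ (hκM z) hM hf hfC hfρ hw hlam)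
  have hsection : ∀ t ∈ J, ∫⁻ z in {z | R ≤ |z|}, ‖κ (z - t)‖ₑ ≤ ENNReal.ofReal ε := fun t ht =>
    (ofReal_integral_norm_eq_lintegral_enorm (hκ.comp_sub_right t).integrableOn).symm.trans_le
      (ENNReal.ofReal_le_ofReal (hκR t ht))
  calc _ ≤ ∫⁻ z in {z | R ≤ |z|}, ENNReal.ofReal (φ (lam * C * M) / M) *
        ∫⁻ t in J, ‖κ (z - t)‖ₑ :=
        setLIntegral_mono' (measurableSet_le measurable_const (by fun_prop)) hpt
    _ = ENNReal.ofReal (φ (lam * C * M) / M) * ∫⁻ z in {z | R ≤ |z|}, ∫⁻ t in J, ‖κ (z - t)‖ₑ :=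
        lintegral_const_mul' _ _ ENNReal.ofReal_ne_top
    _ ≤ _ := by
        gcongr
        exact setLIntegral_setLIntegral_enorm_comp_sub_le hκ.aemeasurable measurableSet_Icc hsection

end Modular

theorem exists_setLIntegral_tail_map_le {φ : ℝ → ℝ} {χ : ℝ → ℝ → ℝ} {f : ℝ → ℝ} {M C ρ lam ε : ℝ}
    (hconv : ConvexOn ℝ (Ici 0) φ) (h0 : φ 0 = 0) (hmono : MonotoneOn φ (Ici 0))
    (hf : Continuous f) (hfC : ∀ u, |f u| ≤ C) (hρ : 0 ≤ ρ) (hfρ : ∀ u, ρ ≤ |u| → f u = 0)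
    (hnorm : ∀ w > (0:ℝ), ∀ z, ∫ t, χ w (z - t) = 1)
    (habs : ∀ w > (0:ℝ), ∀ z, ∫ t, |χ w (z - t)| ≤ M)
    (htail : ∀ ε > (0:ℝ), ∀ γ > (0:ℝ), ∃ R > (0:ℝ), ∃ W : ℝ, ∀ w ≥ W,
      ∀ t ∈ Icc (-γ) γ, ∫ z in {z : ℝ | R ≤ |z|}, |χ w (z - t)| < ε)
    (hlam : 0 ≤ lam) (hε : 0 < ε) :
    ∃ R, ∀ᶠ w in atTop, ∫⁻ z in {z | R ≤ |z|},
      ENNReal.ofReal (φ (lam * |(∫ t, χ w (z - t) * kantorovichMean f w t) - f z|)) ≤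
        ENNReal.ofReal ε := by
  have hM : 1 ≤ M := (hnorm 1 one_pos 0).symm.le.trans
    ((le_abs_self _).trans (abs_integral_le_integral_abs.trans (habs 1 one_pos 0)))
  set c := φ (lam * C * M) / M
  have hc : 0 ≤ c := div_nonneg (hmono.nonneg_of_map_zero h0
    (mul_nonneg (mul_nonneg hlam ((abs_nonneg _).trans (hfC 0))) (by linarith))) (by linarith)
  set ε' := ε / ((c + 1) * (2 * (ρ + 1))) with hε'_def
  have hε' : c * ε' * (ρ + 1 - -(ρ + 1)) ≤ ε := by
    have : c * ε' * (ρ + 1 - -(ρ + 1)) = c / (c + 1) * ε := by rw [hε'_def]; field_simp; ring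
    rw [this]
    exact mul_le_of_le_one_left hε.le ((div_le_one (by linarith)).2 (by linarith))
  obtain ⟨R, -, W, hW⟩ := htail ε' (by positivity) (ρ + 1) (by linarith)
  refine ⟨max R ρ, ?_⟩
  filter_upwards [eventually_ge_atTop W, eventually_ge_atTop 1] with w hwW hw
  have hχ := integrable_of_integral_comp_sub_eq_one (hnorm w (by linarith) 0)
  have hχR : ∀ t ∈ Icc (-(ρ + 1)) (ρ + 1), ∫ z in {z | max R ρ ≤ |z|}, |χ w (z - t)| ≤ ε' :=
    fun t ht => (setIntegral_mono_set (hχ.comp_sub_right t).abs.integrableOn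
      (ae_of_all _ fun _ => abs_nonneg _) (Eventually.of_forall fun z (hz : max R ρ ≤ |z|) =>
        ((le_max_left R ρ).trans hz : R ≤ |z|))).trans (hW w hwW t ht).le
  refine (setLIntegral_tail_map_le hconv h0 hmono hχ (habs w (by linarith)) (by linarith) hf hfC
    hfρ hw hlam (le_max_right R ρ) hχR).trans ?_
  rw [Real.volume_Icc, ← mul_assoc, ← ENNReal.ofReal_mul hc, ← ENNReal.ofReal_mul
    (by positivity)]
  exact ENNReal.ofReal_le_ofReal hε'

theorem tendsto_integral_of_tendstoUniformly_of_tail {ι : Type*} {l : Filter ι}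
    {g : ι → ℝ → ℝ} (hg : ∀ i z, 0 ≤ g i z) (hunif : TendstoUniformly g 0 l)
    (htail : ∀ ε > (0:ℝ), ∃ R, ∀ᶠ i in l,
      ∫⁻ z in {z | R ≤ |z|}, ENNReal.ofReal (g i z) ≤ ENNReal.ofReal ε) :
    Tendsto (fun i => ∫ z, g i z) l (nhds 0) := by
  rw [Metric.tendsto_nhds]
  intro ε hε
  obtain ⟨R, hR⟩ := htail (ε / 2) (half_pos hε)
  set δ := ε / (2 * (2 * |R| + 1))
  have hcover : Icc (-|R|) |R| ∪ {z | R ≤ |z|} = univ :=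
    eq_univ_of_forall fun z => (le_or_gt R |z|).elim Or.inr fun hz =>
      Or.inl (abs_le.1 (hz.le.trans (le_abs_self R)))
  filter_upwards [hR, Metric.tendstoUniformly_iff.1 hunif δ (by positivity)] with i hiR hiδ
  have hcore : ∫⁻ z in Icc (-|R|) |R|, ENNReal.ofReal (g i z) ≤ ENNReal.ofReal (δ * (2 * |R|)) := by
    calc _ ≤ ∫⁻ _ in Icc (-|R|) |R|, ENNReal.ofReal δ :=
          lintegral_mono fun z => ENNReal.ofReal_le_ofReal (by
            simpa [Real.dist_eq, abs_of_nonneg (hg i z)] using (hiδ z).le)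
      _ = ENNReal.ofReal (δ * (2 * |R|)) := by
          rw [setLIntegral_const, Real.volume_Icc, ← ENNReal.ofReal_mul (by positivity)]
          ring_nf
  have hδ : δ * (2 * |R|) < ε / 2 := by
    rw [div_mul_eq_mul_div, div_lt_div_iff₀ (by positivity) two_pos]; nlinarith [abs_nonneg R]
  have hlint : ∫⁻ z, ENNReal.ofReal (g i z) ≤ ENNReal.ofReal (δ * (2 * |R|) + ε / 2) := by
    rw [← Measure.restrict_univ (μ := volume), ← hcover,
      ENNReal.ofReal_add (by positivity) (by positivity)]
    exact (lintegral_union_le _ _ _).trans (add_le_add hcore hiR)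
  rw [dist_zero_right]
  calc ‖∫ z, g i z‖ ≤ (∫⁻ z, ENNReal.ofReal ‖g i z‖).toReal := norm_integral_le_lintegral_norm _
    _ ≤ δ * (2 * |R|) + ε / 2 := by
        simp_rw [Real.norm_eq_abs, abs_of_nonneg (hg i _)]
        exact ENNReal.toReal_le_of_le_ofReal (by positivity) hlint
    _ < ε := by linarith

theorem kantorovich_convolution_orlicz_convergence_general
    (φ : ℝ → ℝ) (f : ℝ → ℝ) (χw : ℝ → ℝ → ℝ) (M : ℝ)
    (hφ_conv : ConvexOn ℝ (Set.Ici 0) φ)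
    (hφ0 : φ 0 = 0)
    (hφ_mono : MonotoneOn φ (Set.Ici 0))
    (hf_cont : Continuous f) (hf_supp : HasCompactSupport f)
    (hχ_norm : ∀ w > (0:ℝ), ∀ z : ℝ, ∫ t, χw w (z - t) = 1)
    (hχ_abs : ∀ w > (0:ℝ), ∀ z : ℝ, ∫ t, |χw w (z - t)| ≤ M)
    (hχ_conc : ∀ γ > (0:ℝ), ∀ ε > (0:ℝ), ∃ W : ℝ, ∀ w ≥ W, ∀ z : ℝ,
      ∫ t in {t : ℝ | γ ≤ |z - t|}, |χw w (z - t)| < ε)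
    (hχ_tail : ∀ ε > (0:ℝ), ∀ γ > (0:ℝ), ∃ R > (0:ℝ), ∃ W : ℝ, ∀ w ≥ W,
      ∀ t ∈ Set.Icc (-γ) γ, ∫ z in {z : ℝ | R ≤ |z|}, |χw w (z - t)| < ε) :
    ∀ lam > (0:ℝ),
      Tendsto (fun w : ℝ =>
        ∫ z : ℝ, φ (lam * |(∫ t, χw w (z - t) *
          ((w / 2) * ∫ u in Set.Icc (t - 1 / w) (t + 1 / w), f u)) - f z|))
        atTop (nhds 0) := by
  intro lam hlam
  obtain ⟨C, hC⟩ := hf_cont.bounded_above_of_compact_support hf_supp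
  obtain ⟨ρ, hρ, hfρ⟩ := hf_supp.exists_pos_le_norm
  simp only [Real.norm_eq_abs] at hC hfρ
  have hS := tendstoUniformly_integral_comp_sub_mul_kantorovichMean
    (hf_supp.uniformContinuous_of_continuous hf_cont) hC hχ_norm hχ_abs hχ_conc
  refine tendsto_integral_of_tendstoUniformly_of_tail
    (fun w z => hφ_mono.nonneg_of_map_zero hφ0 (by positivity)) ?_ fun ε hε =>
      exists_setLIntegral_tail_map_le hφ_conv hφ0 hφ_mono hf_cont hC hρ.le hfρ hχ_norm hχ_abs
        hχ_tail hlam.le hε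
  rw [Metric.tendstoUniformly_iff]
  intro δ hδ
  obtain ⟨η, hη, hφη⟩ := hφ_conv.exists_pos_forall_map_le hφ0 hφ_mono (half_pos hδ)
  filter_upwards [Metric.tendstoUniformly_iff.1 hS (η / lam) (by positivity)] with w hw z
  have hwz := hw z
  rw [Real.dist_eq, abs_sub_comm, lt_div_iff₀' hlam] at hwz
  rw [Pi.zero_apply, dist_zero_left, Real.norm_of_nonneg (hφ_mono.nonneg_of_map_zero hφ0
    (by positivity))]
  exact (hφη _ (by positivity) hwz.le).trans_lt (half_lt_self hδ)

/-- Luxemburg-norm (modular, for every `λ > 0`) convergence of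
Kantorovich convolution operators for continuous compactly supported `f`. -/
theorem kantorovich_convolution_orlicz_convergence
    (φ : ℝ → ℝ) (f : ℝ → ℝ) (χw : ℝ → ℝ → ℝ) (M : ℝ)
    (hφ_conv : ConvexOn ℝ (Set.Ici 0) φ)
    (hφ0 : φ 0 = 0) (hφ_pos : ∀ u > (0:ℝ), 0 < φ u)
    (hφ_mono : MonotoneOn φ (Set.Ici 0))
    (hφ_infty : Tendsto φ atTop atTop)
    (hf_cont : Continuous f) (hf_supp : HasCompactSupport f)
    (hχ_norm : ∀ w > (0:ℝ), ∀ z : ℝ, ∫ t, χw w (z - t) = 1)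
    (hχ_abs : ∀ w > (0:ℝ), ∀ z : ℝ, ∫ t, |χw w (z - t)| ≤ M)
    (hχ_conc : ∀ γ > (0:ℝ), ∀ ε > (0:ℝ), ∃ W : ℝ, ∀ w ≥ W, ∀ z : ℝ,
      ∫ t in {t : ℝ | γ ≤ |z - t|}, |χw w (z - t)| < ε)
    (hχ_tail : ∀ ε > (0:ℝ), ∀ γ > (0:ℝ), ∃ R > (0:ℝ), ∃ W : ℝ, ∀ w ≥ W,
      ∀ t ∈ Set.Icc (-γ) γ, ∫ z in {z : ℝ | R ≤ |z|}, |χw w (z - t)| < ε) :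
    ∀ lam > (0:ℝ),
      Tendsto (fun w : ℝ =>
        ∫ z : ℝ, φ (lam * |(∫ t, χw w (z - t) *
          ((w / 2) * ∫ u in Set.Icc (t - 1 / w) (t + 1 / w), f u)) - f z|))
        atTop (nhds 0) :=
  kantorovich_convolution_orlicz_convergence_general φ f χw M hφ_conv hφ0 hφ_mono hf_cont hf_supp
    hχ_norm hχ_abs hχ_conc hχ_tail
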